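/- The d + 1 elements K_{b₁,b₂} of B_d with b₁, b₂ ∈ ℕ and b₁ + b₂ = d satisfy: K_{b₁,b₂}² = K_{b₁,b₂}; K_{b₁,b₂}·K_{b₁',b₂'} = 0 whenever b₁ + b₂ = b₁' + b₂' = d and b₁ ≠ b₁'; Σ_{b₁+b₂=d} K_{b₁,b₂} = 1; and these elements form an F-basis of the subalgebra B_d⁰ of B_d generated by K₁, K₁⁻¹, K₂, K₂⁻¹ (in particular B_d⁰ has F-dimension d + 1). -/

import Mathlib

noncomputable section

/-- The base field `F = ℚ(v)`. -/
abbrev F : Type := RatFunc ℚ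

/-- The indeterminate `v`. -/
def v : F := RatFunc.X

/-- The quantum integer `[r] = (v^r − v^{−r})/(v − v⁻¹)`. -/
def qint (r : ℤ) : F := (v ^ r - v ^ (-r)) / (v - v⁻¹)

/-- The quantum factorial `[m]! = [m][m−1]⋯[1]`. -/
def qfact (m : ℕ) : F := ∏ i ∈ Finset.range m, qint ((i : ℤ) + 1)

/-- The Gaussian binomial `[r; s] = [r][r−1]⋯[r−s+1]/[s]!`. -/
def qbinom (r : ℤ) (s : ℕ) : F := (∏ i ∈ Finset.range s, qint (r - (i : ℤ))) / qfact s

/-- Generators `e, f, K₁, K₁', K₂, K₂'`. -/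
inductive Gen | e | f | K1 | K1' | K2 | K2'

def gen (x : Gen) : FreeAlgebra F Gen := FreeAlgebra.ι F x

/-- The defining relations of `B_d`. -/
inductive BRel (d : ℕ) : FreeAlgebra F Gen → FreeAlgebra F Gen → Prop
  | comm : BRel d (gen .K1 * gen .K2) (gen .K2 * gen .K1)
  | K1K1' : BRel d (gen .K1 * gen .K1') 1
  | K1'K1 : BRel d (gen .K1' * gen .K1) 1
  | K2K2' : BRel d (gen .K2 * gen .K2') 1
  | K2'K2 : BRel d (gen .K2' * gen .K2) 1
  | K1e : BRel d (gen .K1 * gen .e * gen .K1') (v • gen .e)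
  | K1f : BRel d (gen .K1 * gen .f * gen .K1') (v⁻¹ • gen .f)
  | K2e : BRel d (gen .K2 * gen .e * gen .K2') (v⁻¹ • gen .e)
  | K2f : BRel d (gen .K2 * gen .f * gen .K2') (v • gen .f)
  | ef : BRel d (gen .e * gen .f - gen .f * gen .e)
      ((v - v⁻¹)⁻¹ • (gen .K1 * gen .K2' - gen .K1' * gen .K2))
  | KK : BRel d (gen .K1 * gen .K2) ((v ^ d) • 1)
  | minp : BRel d (((List.range (d + 1)).map
      (fun i => gen .K1 - algebraMap F (FreeAlgebra F Gen) (v ^ i))).prod) 0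

/-- The algebra `B_d`: quotient of the free algebra by the relations above. -/
def B (d : ℕ) : Type := RingQuot (BRel d)

instance (d : ℕ) : Ring (B d) := inferInstanceAs (Ring (RingQuot (BRel d)))
instance (d : ℕ) : Algebra F (B d) := inferInstanceAs (Algebra F (RingQuot (BRel d)))

/-- The image of `e` in `B_d`. -/
def bE (d : ℕ) : B d := RingQuot.mkAlgHom F (BRel d) (gen .e)
/-- The image of `f` in `B_d`. -/
def bF (d : ℕ) : B d := RingQuot.mkAlgHom F (BRel d) (gen .f)
/-- The image of `K₁` in `B_d`. -/
def bK1 (d : ℕ) : B d := RingQuot.mkAlgHom F (BRel d) (gen .K1)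
/-- The image of `K₁⁻¹` in `B_d`. -/
def bK1' (d : ℕ) : B d := RingQuot.mkAlgHom F (BRel d) (gen .K1')
/-- The image of `K₂` in `B_d`. -/
def bK2 (d : ℕ) : B d := RingQuot.mkAlgHom F (BRel d) (gen .K2)
/-- The image of `K₂⁻¹` in `B_d`. -/
def bK2' (d : ℕ) : B d := RingQuot.mkAlgHom F (BRel d) (gen .K2')

/-- `[X; c; t] = ∏_{i=1}^{t} (X·v^{c−i+1} − X⁻¹·v^{−c+i−1})/(v^i − v^{−i})`,
for an invertible `X` with inverse `Xinv`. -/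
def qK {A : Type} [Ring A] [Algebra F A] (X Xinv : A) (c : ℤ) (t : ℕ) : A :=
  ((List.range t).map (fun i =>
     (v ^ ((i : ℤ) + 1) - v ^ (-((i : ℤ) + 1)))⁻¹ •
       (v ^ (c - (i : ℤ)) • X - v ^ ((i : ℤ) - c) • Xinv))).prod

/-- `K_{b₁,b₂} = [K₁; b₁]·[K₂; b₂] ∈ B_d`. -/
def Kbox (d : ℕ) (b₁ b₂ : ℕ) : B d :=
  qK (bK1 d) (bK1' d) 0 b₁ * qK (bK2 d) (bK2' d) 0 b₂

/-- The divided power `e^{(m)} = e^m/[m]!`. -/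
def eD (d : ℕ) (m : ℕ) : B d := (qfact m)⁻¹ • (bE d) ^ m

/-- The divided power `f^{(m)} = f^m/[m]!`. -/
def fD (d : ℕ) (m : ℕ) : B d := (qfact m)⁻¹ • (bF d) ^ m

/-- The subalgebra `B_d⁰` of `B_d` generated by `K₁, K₁⁻¹, K₂, K₂⁻¹`. -/
def B0 (d : ℕ) : Subalgebra F (B d) :=
  Algebra.adjoin F {bK1 d, bK1' d, bK2 d, bK2' d}


set_option synthInstance.maxHeartbeats 1000000
set_option maxHeartbeats 1000000
open Matrix

lemma v_ne_zero : v ≠ 0 := RatFunc.X_ne_zero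


lemma vpow_ne_one {n : ℕ} (hn : 0 < n) : v ^ n ≠ 1 := by
  intro h
  have : (Polynomial.X : Polynomial ℚ) ^ n = 1 := by
    apply RatFunc.algebraMap_injective ℚ
    simpa [v, map_pow, RatFunc.algebraMap_X] using h
  have := congrArg Polynomial.natDegree this
  simp [Polynomial.natDegree_X_pow] at this
  omega

lemma vzpow_sub_ne {a : ℤ} (ha : 0 < a) : v ^ a - v ^ (-a) ≠ 0 := by
  intro h
  have h2 : v ^ a = v ^ (-a) := by linear_combination h
  have h3 : v ^ (2 * a) = 1 := by
    have := congrArg (· * v ^ a) h2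
    simp only [← zpow_add₀ v_ne_zero] at this
    simpa [two_mul] using this
  have : v ^ (2 * a).toNat = 1 := by
    rw [← h3, ← zpow_natCast]; congr 1; omega
  exact vpow_ne_one (by omega) this

lemma hw : v - v⁻¹ ≠ 0 := by
  have := vzpow_sub_ne (a := 1) one_pos
  simpa [zpow_one, _root_.zpow_neg] using this

lemma qint_zero : qint 0 = 0 := by simp [qint]

lemma qef (a D : ℤ) :
    qint (D - a + 1) * qint a - qint (a+1) * qint (D-a)
      = (v - v⁻¹)⁻¹ * (v^a * v^(a-D) - v^(-a) * v^(D-a)) := by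
  have h0 := v_ne_zero
  have key : (v ^ (D - a + 1) - v ^ (-(D - a + 1))) * (v ^ a - v ^ (-a))
      - (v ^ (a+1) - v ^ (-(a+1))) * (v ^ (D-a) - v ^ (-(D-a)))
      = (v - v⁻¹) * (v^a * v^(a-D) - v^(-a) * v^(D-a)) := by
    have P : ∀ m n : ℤ, v^m * v^n = v^(m+n) := fun m n => (zpow_add₀ h0 m n).symm
    have hwz : v - v⁻¹ = v^(1:ℤ) - v^(-1:ℤ) := by rw [zpow_one, zpow_neg_one v]
    rw [hwz]
    simp only [sub_mul, mul_sub, P]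
    ring_nf
  rw [qint, qint, qint, qint, div_mul_div_comm, div_mul_div_comm, ← sub_div, key,
    mul_div_mul_left _ _ hw, div_eq_inv_mul]


lemma zsh (a b : ℤ) (x : F) (h : a + b = 1) : v ^ a * x * v ^ b = v * x := by
  rw [mul_comm (v^a) x, mul_assoc, ← zpow_add₀ v_ne_zero, h, zpow_one v, mul_comm]

lemma zsh' (a b : ℤ) (x : F) (h : a + b = -1) : v ^ a * x * v ^ b = v⁻¹ * x := by
  rw [mul_comm (v^a) x, mul_assoc, ← zpow_add₀ v_ne_zero, h, zpow_neg_one v, mul_comm]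

variable (d : ℕ)

def mK1 : Matrix (Fin (d+1)) (Fin (d+1)) F := diagonal (fun j => v ^ (j:ℤ))
def mK1' : Matrix (Fin (d+1)) (Fin (d+1)) F := diagonal (fun j => v ^ (-(j:ℤ)))
def mK2 : Matrix (Fin (d+1)) (Fin (d+1)) F := diagonal (fun j => v ^ ((d:ℤ) - (j:ℤ)))
def mK2' : Matrix (Fin (d+1)) (Fin (d+1)) F := diagonal (fun j => v ^ ((j:ℤ) - (d:ℤ)))
def mE : Matrix (Fin (d+1)) (Fin (d+1)) F :=
  fun i j => if (i:ℕ) = (j:ℕ) + 1 then qint ((d:ℤ) - (j:ℤ)) else 0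
def mF : Matrix (Fin (d+1)) (Fin (d+1)) F :=
  fun i j => if (i:ℕ) + 1 = (j:ℕ) then qint (j:ℤ) else 0

lemma hK1K1' : mK1 d * mK1' d = 1 := by
  rw [mK1, mK1', diagonal_mul_diagonal, ← diagonal_one]
  exact congrArg diagonal (funext fun i => by rw [← zpow_add₀ v_ne_zero]; simp)

lemma hK1'K1 : mK1' d * mK1 d = 1 := by
  rw [mK1, mK1', diagonal_mul_diagonal, ← diagonal_one]
  exact congrArg diagonal (funext fun i => by rw [← zpow_add₀ v_ne_zero]; simp)

lemma hK2K2' : mK2 d * mK2' d = 1 := by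
  rw [mK2, mK2', diagonal_mul_diagonal, ← diagonal_one]
  exact congrArg diagonal (funext fun i => by rw [← zpow_add₀ v_ne_zero]; simp)

lemma hK2'K2 : mK2' d * mK2 d = 1 := by
  rw [mK2, mK2', diagonal_mul_diagonal, ← diagonal_one]
  exact congrArg diagonal (funext fun i => by rw [← zpow_add₀ v_ne_zero]; simp)

lemma hcomm : mK1 d * mK2 d = mK2 d * mK1 d := by
  rw [mK1, mK2, diagonal_mul_diagonal, diagonal_mul_diagonal]
  exact congrArg diagonal (funext fun i => mul_comm _ _)

lemma hKK : mK1 d * mK2 d = (v ^ d) • (1 : Matrix (Fin (d+1)) (Fin (d+1)) F) := by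
  rw [mK1, mK2, diagonal_mul_diagonal, ← diagonal_one, ← diagonal_smul]
  refine congrArg diagonal (funext fun i => ?_)
  simp only [Pi.smul_apply, smul_eq_mul, mul_one]
  rw [← zpow_add₀ v_ne_zero, ← zpow_natCast v d]
  congr 1; ring

lemma hK1e : mK1 d * mE d * mK1' d = v • mE d := by
  ext i j
  rw [mK1, mK1', mul_diagonal, diagonal_mul, Matrix.smul_apply, mE]
  by_cases h : (i:ℕ) = (j:ℕ) + 1
  · rw [if_pos h, smul_eq_mul, zsh (i:ℤ) (-(j:ℤ)) _ (by omega)]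
  · simp [h]

lemma hK1f : mK1 d * mF d * mK1' d = v⁻¹ • mF d := by
  ext i j
  rw [mK1, mK1', mul_diagonal, diagonal_mul, Matrix.smul_apply, mF]
  by_cases h : (i:ℕ) + 1 = (j:ℕ)
  · rw [if_pos h, smul_eq_mul, zsh' (i:ℤ) (-(j:ℤ)) _ (by omega)]
  · simp [h]

lemma hK2e : mK2 d * mE d * mK2' d = v⁻¹ • mE d := by
  ext i j
  rw [mK2, mK2', mul_diagonal, diagonal_mul, Matrix.smul_apply, mE]
  by_cases h : (i:ℕ) = (j:ℕ) + 1
  · rw [if_pos h, smul_eq_mul, zsh' ((d:ℤ)-(i:ℤ)) ((j:ℤ)-(d:ℤ)) _ (by omega)]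
  · simp [h]

lemma hK2f : mK2 d * mF d * mK2' d = v • mF d := by
  ext i j
  rw [mK2, mK2', mul_diagonal, diagonal_mul, Matrix.smul_apply, mF]
  by_cases h : (i:ℕ) + 1 = (j:ℕ)
  · rw [if_pos h, smul_eq_mul, zsh ((d:ℤ)-(i:ℤ)) ((j:ℤ)-(d:ℤ)) _ (by omega)]
  · simp [h]


variable (d : ℕ)

lemma mulEF : mE d * mF d
    = diagonal (fun j : Fin (d+1) => qint ((d:ℤ) - (j:ℤ) + 1) * qint (j:ℤ)) := by
  ext i j
  rw [mul_apply]
  simp only [mE, mF, ite_mul, zero_mul, mul_ite, mul_zero]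
  by_cases hij : i = j
  · subst hij
    rw [diagonal_apply_eq]
    rcases Nat.eq_zero_or_pos (i:ℕ) with h0 | hpos
    · rw [Finset.sum_eq_zero]
      · have : ((i:ℕ):ℤ) = 0 := by omega
        simp [this, qint_zero]
      · intro k _
        split_ifs with h1 h2 <;> first | rfl | omega
    · obtain ⟨m, hm⟩ : ∃ m, (i:ℕ) = m + 1 := ⟨(i:ℕ) - 1, by omega⟩
      rw [Finset.sum_eq_single_of_mem (⟨m, by omega⟩ : Fin (d+1)) (Finset.mem_univ _)]
      · have h1 : (i:ℕ) = ((⟨m, by omega⟩ : Fin (d+1)):ℕ) + 1 := hm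
        rw [if_pos h1, if_pos h1.symm]
        have : ((i:ℕ):ℤ) = (m:ℤ) + 1 := by omega
        rw [show ((d:ℤ) - ((⟨m, by omega⟩ : Fin (d+1)):ℕ) : ℤ) = (d:ℤ) - ((i:ℕ):ℤ) + 1 by
          push_cast; omega]
      · intro b _ hb
        split_ifs with h1 h2 <;> first | rfl | skip
        exfalso
        apply hb
        apply Fin.ext
        simp only []
        omega
  · rw [diagonal_apply_ne _ hij, Finset.sum_eq_zero]
    intro k _
    have : (i:ℕ) ≠ (j:ℕ) := fun h => hij (Fin.ext h)
    split_ifs with h1 h2 <;> first | rfl | omega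

lemma mulFE : mF d * mE d
    = diagonal (fun j : Fin (d+1) => qint ((j:ℤ) + 1) * qint ((d:ℤ) - (j:ℤ))) := by
  ext i j
  rw [mul_apply]
  simp only [mE, mF, ite_mul, zero_mul, mul_ite, mul_zero]
  by_cases hij : i = j
  · subst hij
    rw [diagonal_apply_eq]
    rcases Nat.lt_or_ge (i:ℕ) d with hlt | hge
    · rw [Finset.sum_eq_single_of_mem (⟨(i:ℕ)+1, by omega⟩ : Fin (d+1)) (Finset.mem_univ _)]
      · have h1 : (i:ℕ) + 1 = ((⟨(i:ℕ)+1, by omega⟩ : Fin (d+1)):ℕ) := rfl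
        rw [if_pos h1, if_pos h1.symm]
        rw [show ((((⟨(i:ℕ)+1, by omega⟩ : Fin (d+1)):ℕ)):ℤ) = ((i:ℕ):ℤ) + 1 by push_cast; omega]
      · intro b _ hb
        split_ifs with h1 h2 <;> first | rfl | skip
        exfalso
        apply hb
        apply Fin.ext
        simp only []
        omega
    · have hid : (i:ℕ) = d := by omega
      rw [Finset.sum_eq_zero]
      · have : ((d:ℤ) - ((i:ℕ):ℤ)) = 0 := by omega
        simp [this, qint_zero]
      · intro k _
        split_ifs with h1 h2 <;> first | rfl | omega
  · rw [diagonal_apply_ne _ hij, Finset.sum_eq_zero]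
    intro k _
    have : (i:ℕ) ≠ (j:ℕ) := fun h => hij (Fin.ext h)
    split_ifs with h1 h2 <;> first | rfl | omega

lemma hef : mE d * mF d - mF d * mE d
    = (v - v⁻¹)⁻¹ • (mK1 d * mK2' d - mK1' d * mK2 d) := by
  rw [mulEF, mulFE, mK1, mK2', mK1', mK2, diagonal_mul_diagonal, diagonal_mul_diagonal,
    diagonal_sub, diagonal_sub, ← diagonal_smul]
  refine congrArg diagonal (funext fun j => ?_)
  have := qef (j:ℤ) (d:ℤ)
  simpa [smul_eq_mul] using this

lemma prod_diag (l : List ℕ) (f : ℕ → Fin (d+1) → F) :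
    ((l.map fun i => diagonal (f i)).prod : Matrix (Fin (d+1)) (Fin (d+1)) F)
      = diagonal (fun j => (l.map fun i => f i j).prod) := by
  induction l with
  | nil => simp
  | cons a l ih =>
    simp only [List.map_cons, List.prod_cons, ih, diagonal_mul_diagonal]

lemma hminp : (((List.range (d+1)).map
      (fun i => mK1 d - algebraMap F (Matrix (Fin (d+1)) (Fin (d+1)) F) (v ^ i))).prod) = 0 := by
  have : ∀ i : ℕ, mK1 d - algebraMap F (Matrix (Fin (d+1)) (Fin (d+1)) F) (v ^ i)
      = diagonal (fun j : Fin (d+1) => v ^ ((j:ℕ):ℤ) - v ^ i) := by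
    intro i
    rw [mK1, Matrix.algebraMap_eq_diagonal, ← diagonal_sub]
    rfl
  simp only [this]
  rw [prod_diag, ← diagonal_zero]
  refine congrArg diagonal (funext fun j => ?_)
  apply List.prod_eq_zero
  refine List.mem_map.2 ⟨(j:ℕ), List.mem_range.2 (by omega), ?_⟩
  rw [← zpow_natCast v (j:ℕ)]
  ring

lemma qK_eq {A : Type} [Ring A] [Algebra F A] (X Xinv : A) (c : ℤ) (t : ℕ) :
    qK X Xinv c t = ((List.range t).map (fun i : ℕ =>
     (v ^ ((i:ℤ) + 1) - v ^ (-((i:ℤ) + 1)))⁻¹ •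
       (v ^ (c - (i:ℤ)) • X - v ^ ((i:ℤ) - c) • Xinv))).prod := by
  rw [qK]
  congr 1
  induction t with
  | zero => simp
  | succ n ih =>
    rw [List.range_succ]
    simp only [List.map_append, List.flatMap_append, List.map_append] at *
    rw [← ih]
    simp

def mGen : Gen → Matrix (Fin (d+1)) (Fin (d+1)) F
  | .e => mE d
  | .f => mF d
  | .K1 => mK1 d
  | .K1' => mK1' d
  | .K2 => mK2 d
  | .K2' => mK2' d

def rho : FreeAlgebra F Gen →ₐ[F] Matrix (Fin (d+1)) (Fin (d+1)) F :=
  FreeAlgebra.lift F (mGen d)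

lemma rho_gen (x : Gen) : rho d (gen x) = mGen d x := by
  rw [rho, gen, FreeAlgebra.lift_ι_apply]

lemma rho_rel : ∀ ⦃a b⦄, BRel d a b → rho d a = rho d b := by
  intro a b r
  cases r with
  | comm => simpa only [_root_.map_mul, rho_gen, mGen] using hcomm d
  | K1K1' => simpa only [_root_.map_mul, _root_.map_one, rho_gen, mGen] using hK1K1' d
  | K1'K1 => simpa only [_root_.map_mul, _root_.map_one, rho_gen, mGen] using hK1'K1 d
  | K2K2' => simpa only [_root_.map_mul, _root_.map_one, rho_gen, mGen] using hK2K2' d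
  | K2'K2 => simpa only [_root_.map_mul, _root_.map_one, rho_gen, mGen] using hK2'K2 d
  | K1e => simpa only [_root_.map_mul, _root_.map_smul, rho_gen, mGen] using hK1e d
  | K1f => simpa only [_root_.map_mul, _root_.map_smul, rho_gen, mGen] using hK1f d
  | K2e => simpa only [_root_.map_mul, _root_.map_smul, rho_gen, mGen] using hK2e d
  | K2f => simpa only [_root_.map_mul, _root_.map_smul, rho_gen, mGen] using hK2f d
  | ef => simpa only [_root_.map_mul, map_sub, _root_.map_smul, rho_gen, mGen] using hef d
  | KK => simpa only [_root_.map_mul, _root_.map_smul, _root_.map_one, rho_gen, mGen] using hKK d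
  | minp =>
    rw [map_zero, map_list_prod, List.map_map]
    have h : (⇑(rho d) ∘ fun i => gen Gen.K1 - (algebraMap F (FreeAlgebra F Gen)) (v ^ i))
        = fun i => mK1 d - algebraMap F (Matrix (Fin (d+1)) (Fin (d+1)) F) (v ^ i) := by
      funext i
      simp only [Function.comp_apply, map_sub, AlgHom.commutes, rho_gen, mGen]
    rw [h, hminp d]

def theta : B d →ₐ[F] Matrix (Fin (d+1)) (Fin (d+1)) F :=
  RingQuot.liftAlgHom F ⟨rho d, rho_rel d⟩

lemma theta_mk (x : FreeAlgebra F Gen) :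
    theta d (RingQuot.mkAlgHom F (BRel d) x) = rho d x :=
  RingQuot.liftAlgHom_mkAlgHom_apply F (rho d) (rho_rel d) x

lemma theta_K1 : theta d (bK1 d) = mK1 d := by rw [bK1, theta_mk, rho_gen]; rfl
lemma theta_K1' : theta d (bK1' d) = mK1' d := by rw [bK1', theta_mk, rho_gen]; rfl
lemma theta_K2 : theta d (bK2 d) = mK2 d := by rw [bK2, theta_mk, rho_gen]; rfl
lemma theta_K2' : theta d (bK2' d) = mK2' d := by rw [bK2', theta_mk, rho_gen]; rfl

/-- scalar version of qK -/
def qKs (x y : F) (c : ℤ) (t : ℕ) : F :=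
  ((List.range t).map (fun i : ℕ =>
     (v ^ ((i : ℤ) + 1) - v ^ (-((i : ℤ) + 1)))⁻¹ *
       (v ^ (c - (i : ℤ)) * x - v ^ ((i : ℤ) - c) * y))).prod

lemma map_qK {A B : Type} [Ring A] [Algebra F A] [Ring B] [Algebra F B]
    (φ : A →ₐ[F] B) (X Xinv : A) (c : ℤ) (t : ℕ) :
    φ (qK X Xinv c t) = qK (φ X) (φ Xinv) c t := by
  rw [qK_eq, qK_eq, map_list_prod, List.map_map]
  congr 1
  refine List.map_congr_left fun i _ => ?_
  simp only [Function.comp_apply, _root_.map_smul, map_sub]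

lemma qK_diagonal (a b : Fin (d+1) → F) (c : ℤ) (t : ℕ) :
    qK (diagonal a) (diagonal b) c t = diagonal (fun j => qKs (a j) (b j) c t) := by
  rw [qK_eq]
  have h : ∀ i : ℕ,
      (v ^ ((i : ℤ) + 1) - v ^ (-((i : ℤ) + 1)))⁻¹ •
        (v ^ (c - (i : ℤ)) • diagonal a - v ^ ((i : ℤ) - c) • diagonal b)
      = diagonal (fun j => (v ^ ((i : ℤ) + 1) - v ^ (-((i : ℤ) + 1)))⁻¹ *
          (v ^ (c - (i : ℤ)) * a j - v ^ ((i : ℤ) - c) * b j)) := by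
    intro i
    rw [← diagonal_smul, ← diagonal_smul, diagonal_sub, ← diagonal_smul]
    congr 1
  simp only [h]
  rw [prod_diag]
  rfl

lemma den_ne (i : ℕ) : v ^ ((i : ℤ) + 1) - v ^ (-((i : ℤ) + 1)) ≠ 0 :=
  vzpow_sub_ne (by omega)

lemma qKs_vanish {j t : ℕ} (hj : j < t) : qKs (v ^ (j:ℤ)) (v ^ (-(j:ℤ))) 0 t = 0 := by
  rw [qKs]
  apply List.prod_eq_zero
  refine List.mem_map.2 ⟨j, List.mem_range.2 hj, ?_⟩
  rw [show (0 - (j:ℤ)) = -(j:ℤ) by ring, show ((j:ℤ) - 0) = (j:ℤ) by ring,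
    ← zpow_add₀ v_ne_zero, ← zpow_add₀ v_ne_zero]
  simp

lemma list_range_prod (f : ℕ → F) (n : ℕ) :
    ((List.range n).map f).prod = ∏ i ∈ Finset.range n, f i := rfl

lemma qKs_diag (t : ℕ) : qKs (v ^ (t:ℤ)) (v ^ (-(t:ℤ))) 0 t = 1 := by
  rw [qKs, list_range_prod]
  have conv : ∀ i : ℕ, (v ^ ((i : ℤ) + 1) - v ^ (-((i : ℤ) + 1)))⁻¹ *
        (v ^ (0 - (i : ℤ)) * v ^ (t:ℤ) - v ^ ((i : ℤ) - 0) * v ^ (-(t:ℤ)))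
      = (v ^ ((i : ℤ) + 1) - v ^ (-((i : ℤ) + 1)))⁻¹ *
        (v ^ ((t:ℤ) - (i:ℤ)) - v ^ ((i:ℤ) - (t:ℤ))) := by
    intro i
    rw [← zpow_add₀ v_ne_zero, ← zpow_add₀ v_ne_zero]
    ring_nf
  simp only [conv]
  rw [Finset.prod_mul_distrib, Finset.prod_inv_distrib]
  have hrefl : ∏ i ∈ Finset.range t, (v ^ ((t:ℤ) - (i:ℤ)) - v ^ ((i:ℤ) - (t:ℤ)))
      = ∏ i ∈ Finset.range t, (v ^ ((i : ℤ) + 1) - v ^ (-((i : ℤ) + 1))) := by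
    rw [← Finset.prod_range_reflect]
    refine Finset.prod_congr rfl fun i hi => ?_
    have hi' : i < t := Finset.mem_range.1 hi
    congr 2 <;> push_cast <;> omega
  rw [hrefl, inv_mul_cancel₀]
  exact Finset.prod_ne_zero_iff.2 fun i _ => den_ne i

lemma theta_Kbox (b₁ b₂ : ℕ) (hb : b₁ + b₂ = d) :
    theta d (Kbox d b₁ b₂)
      = diagonal (fun j : Fin (d+1) => if (j:ℕ) = b₁ then 1 else 0) := by
  rw [Kbox, _root_.map_mul, map_qK, map_qK, theta_K1, theta_K1', theta_K2, theta_K2',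
    mK1, mK1', mK2, mK2', qK_diagonal, qK_diagonal, diagonal_mul_diagonal]
  refine congrArg diagonal (funext fun j => ?_)
  rcases lt_trichotomy (j:ℕ) b₁ with h | h | h
  · rw [qKs_vanish h, zero_mul, if_neg (by omega)]
  · have h2 : (d:ℤ) - ((j:ℕ):ℤ) = ((b₂:ℕ):ℤ) := by omega
    have h3 : ((j:ℕ):ℤ) - (d:ℤ) = -((b₂:ℕ):ℤ) := by omega
    have h4 : ((j:ℕ):ℤ) = ((b₁:ℕ):ℤ) := by omega
    rw [h2, h3, h4, qKs_diag, qKs_diag, one_mul, if_pos h]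
  · have hj : (j:ℕ) ≤ d := by omega
    have h2 : (d:ℤ) - ((j:ℕ):ℤ) = (((d - (j:ℕ) : ℕ)):ℤ) := by omega
    have h3 : ((j:ℕ):ℤ) - (d:ℤ) = -(((d - (j:ℕ) : ℕ)):ℤ) := by omega
    rw [h2, h3, qKs_vanish (j := d - (j:ℕ)) (t := b₂) (by omega), mul_zero, if_neg (by omega)]

/-! ### Algebra side -/

lemma bK1_mul_bK1' : bK1 d * bK1' d = 1 := by
  have h := RingQuot.mkAlgHom_rel F (BRel.K1K1' (d := d))
  rw [_root_.map_mul, _root_.map_one] at h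
  exact h

lemma bK1'_mul_bK1 : bK1' d * bK1 d = 1 := by
  have h := RingQuot.mkAlgHom_rel F (BRel.K1'K1 (d := d))
  rw [_root_.map_mul, _root_.map_one] at h
  exact h

lemma bK2_mul_bK2' : bK2 d * bK2' d = 1 := by
  have h := RingQuot.mkAlgHom_rel F (BRel.K2K2' (d := d))
  rw [_root_.map_mul, _root_.map_one] at h
  exact h

lemma bKK : bK1 d * bK2 d = (v ^ d) • 1 := by
  have h := RingQuot.mkAlgHom_rel F (BRel.KK (d := d))
  rw [_root_.map_mul, _root_.map_smul, _root_.map_one] at h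
  exact h

lemma bK2_eq : bK2 d = (v ^ d) • bK1' d := by
  calc bK2 d = (bK1' d * bK1 d) * bK2 d := by rw [bK1'_mul_bK1, one_mul]
  _ = bK1' d * (bK1 d * bK2 d) := by rw [mul_assoc]
  _ = bK1' d * ((v ^ d) • 1) := by rw [bKK]
  _ = (v ^ d) • bK1' d := by rw [mul_smul_comm, mul_one]

lemma bK2'_eq : bK2' d = (v ^ d)⁻¹ • bK1 d := by
  have hv : (v ^ d : F) ≠ 0 := pow_ne_zero _ v_ne_zero
  calc bK2' d = (v ^ d)⁻¹ • ((v ^ d) • (1 : B d) * bK2' d) := by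
        rw [smul_mul_assoc, one_mul, smul_smul, inv_mul_cancel₀ hv, one_smul]
  _ = (v ^ d)⁻¹ • ((bK1 d * bK2 d) * bK2' d) := by rw [bKK]
  _ = (v ^ d)⁻¹ • (bK1 d * (bK2 d * bK2' d)) := by rw [mul_assoc]
  _ = (v ^ d)⁻¹ • bK1 d := by rw [bK2_mul_bK2', mul_one]

lemma bminp :
    ((List.range (d+1)).map (fun i => bK1 d - algebraMap F (B d) (v ^ i))).prod = 0 := by
  have h := RingQuot.mkAlgHom_rel F (BRel.minp (d := d))
  rw [map_zero, map_list_prod, List.map_map] at h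
  refine Eq.trans ?_ h
  congr 1
  refine List.map_congr_left fun i _ => ?_
  simp only [Function.comp_apply, map_sub, AlgHom.commutes, bK1]
  rfl

/-- the minimal polynomial -/
def pmin : Polynomial F := ∏ i ∈ Finset.range (d+1), (Polynomial.X - Polynomial.C (v ^ i))

lemma list_range_prod' {M : Type*} [CommMonoid M] (f : ℕ → M) (n : ℕ) :
    ∏ i ∈ Finset.range n, f i = ((List.range n).map f).prod := rfl

lemma aeval_pmin : Polynomial.aeval (bK1 d) (pmin d) = 0 := by
  rw [pmin, list_range_prod', map_list_prod, List.map_map, ← bminp d]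
  congr 1
  refine List.map_congr_left fun i _ => ?_
  simp only [Function.comp_apply, map_sub, Polynomial.aeval_X, Polynomial.aeval_C]

lemma pmin_monic : (pmin d).Monic :=
  Polynomial.monic_prod_of_monic _ _ fun i _ => Polynomial.monic_X_sub_C _

lemma pmin_natDegree : (pmin d).natDegree = d + 1 := by
  rw [pmin, Polynomial.natDegree_prod]
  · rw [Finset.sum_congr rfl fun i _ => Polynomial.natDegree_X_sub_C (v ^ i)]
    simp
  · intro i _
    exact Polynomial.X_sub_C_ne_zero _

def M0 : Submodule F (B d) := Submodule.span F (Set.range fun i : Fin (d+1) => (bK1 d) ^ (i:ℕ))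

lemma aeval_mem_M0 (q : Polynomial F) : Polynomial.aeval (bK1 d) q ∈ M0 d := by
  have hmon := pmin_monic d
  have hdeg : (q %ₘ pmin d).natDegree < d + 1 := by
    rw [← pmin_natDegree d]
    refine Polynomial.natDegree_modByMonic_lt q hmon ?_
    intro h1
    have := pmin_natDegree d
    rw [h1] at this
    simp at this
  have heq : Polynomial.aeval (bK1 d) q = Polynomial.aeval (bK1 d) (q %ₘ pmin d) := by
    conv_lhs => rw [← Polynomial.modByMonic_add_div q (pmin d)]
    rw [map_add, _root_.map_mul, aeval_pmin, zero_mul, add_zero]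
  rw [heq, Polynomial.aeval_eq_sum_range' hdeg]
  apply Submodule.sum_mem
  intro i hi
  exact Submodule.smul_mem _ _
    (Submodule.subset_span ⟨⟨i, Finset.mem_range.1 hi⟩, rfl⟩)

lemma bK1_mem : bK1 d ∈ B0 d := Algebra.subset_adjoin (by simp)
lemma bK1'_mem : bK1' d ∈ B0 d := Algebra.subset_adjoin (by simp)
lemma bK2_mem : bK2 d ∈ B0 d := Algebra.subset_adjoin (by simp)
lemma bK2'_mem : bK2' d ∈ B0 d := Algebra.subset_adjoin (by simp)

lemma pmin_coeff_zero_ne : (pmin d).coeff 0 ≠ 0 := by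
  rw [Polynomial.coeff_zero_eq_eval_zero, pmin, Polynomial.eval_prod]
  refine Finset.prod_ne_zero_iff.2 fun i _ => ?_
  simp only [Polynomial.eval_sub, Polynomial.eval_X, Polynomial.eval_C, zero_sub]
  exact neg_ne_zero.2 (pow_ne_zero _ v_ne_zero)

lemma bK1'_eq_aeval :
    bK1' d = Polynomial.aeval (bK1 d) (-(((pmin d).coeff 0)⁻¹) • (pmin d).divX) := by
  set c := (pmin d).coeff 0 with hc
  have hc0 : c ≠ 0 := pmin_coeff_zero_ne d
  have h1 : bK1 d * Polynomial.aeval (bK1 d) ((pmin d).divX) + c • 1 = 0 := by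
    have := congrArg (Polynomial.aeval (bK1 d)) (Polynomial.X_mul_divX_add (pmin d))
    rw [map_add, _root_.map_mul, Polynomial.aeval_X, aeval_pmin] at this
    rw [← this]
    congr 1
    rw [Polynomial.aeval_C, Algebra.algebraMap_eq_smul_one]
  have h2 : bK1 d * Polynomial.aeval (bK1 d) (-(c⁻¹) • (pmin d).divX) = 1 := by
    rw [_root_.map_smul, mul_smul_comm]
    have h3 : bK1 d * Polynomial.aeval (bK1 d) ((pmin d).divX) = -(c • 1) := by
      linear_combination (norm := abel) h1
    rw [h3, smul_neg, neg_smul, neg_neg, smul_smul, inv_mul_cancel₀ hc0, one_smul]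
  calc bK1' d = bK1' d * (bK1 d * Polynomial.aeval (bK1 d) (-(c⁻¹) • (pmin d).divX)) := by
        rw [h2, mul_one]
  _ = (bK1' d * bK1 d) * Polynomial.aeval (bK1 d) (-(c⁻¹) • (pmin d).divX) := by
        rw [mul_assoc]
  _ = _ := by rw [bK1'_mul_bK1, one_mul]

lemma B0_le_range : B0 d ≤ (Polynomial.aeval (bK1 d)).range := by
  apply Algebra.adjoin_le
  intro x hx
  simp only [Set.mem_insert_iff, Set.mem_singleton_iff] at hx
  rcases hx with rfl | rfl | rfl | rfl
  · exact (AlgHom.mem_range _).2 ⟨Polynomial.X, Polynomial.aeval_X _⟩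
  · exact (AlgHom.mem_range _).2 ⟨_, (bK1'_eq_aeval d).symm⟩
  · rw [bK2_eq]
    exact Subalgebra.smul_mem _ ((AlgHom.mem_range _).2 ⟨_, (bK1'_eq_aeval d).symm⟩) _
  · rw [bK2'_eq]
    exact Subalgebra.smul_mem _ ((AlgHom.mem_range _).2 ⟨Polynomial.X, Polynomial.aeval_X _⟩) _

lemma B0_le_M0 : Subalgebra.toSubmodule (B0 d) ≤ M0 d := by
  intro x hx
  obtain ⟨q, rfl⟩ := B0_le_range d hx
  exact aeval_mem_M0 d q

lemma qK_mem_B0 {X Xinv : B d} (hX : X ∈ B0 d) (hXi : Xinv ∈ B0 d) (c : ℤ) (t : ℕ) :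
    qK X Xinv c t ∈ B0 d := by
  rw [qK_eq]
  induction t with
  | zero => simpa using one_mem (B0 d)
  | succ n ih =>
    rw [List.range_succ, List.map_append, List.prod_append]
    refine mul_mem ih ?_
    simp only [List.map_cons, List.map_nil, List.prod_cons, List.prod_nil, mul_one]
    exact Subalgebra.smul_mem _ (sub_mem (Subalgebra.smul_mem _ hX _)
      (Subalgebra.smul_mem _ hXi _)) _

lemma Kbox_mem_B0 (b₁ b₂ : ℕ) : Kbox d b₁ b₂ ∈ B0 d := by
  rw [Kbox]
  exact mul_mem (qK_mem_B0 d (bK1_mem d) (bK1'_mem d) 0 b₁)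
    (qK_mem_B0 d (bK2_mem d) (bK2'_mem d) 0 b₂)

/-! ### linear independence and the isomorphism argument -/

def diagFam (b : Fin (d+1)) : Matrix (Fin (d+1)) (Fin (d+1)) F :=
  diagonal (fun j : Fin (d+1) => if (j:ℕ) = (b:ℕ) then 1 else 0)

lemma diag_indep : LinearIndependent F (diagFam d) := by
  rw [Fintype.linearIndependent_iff]
  intro g hg b
  have h2 := congrArg (fun m : Matrix (Fin (d+1)) (Fin (d+1)) F => m b b) hg
  simp only [diagFam, Matrix.sum_apply, Matrix.smul_apply, diagonal_apply_eq,
    smul_eq_mul, Matrix.zero_apply] at h2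
  rw [Finset.sum_congr rfl (fun i _ => by
    rw [show ((if (b:ℕ) = (i:ℕ) then (1:F) else 0)) = if i = b then 1 else 0 by
      rcases eq_or_ne i b with rfl | hne
      · simp
      · rw [if_neg (fun hh : (b:ℕ) = (i:ℕ) => hne (Fin.ext hh.symm)), if_neg hne]])] at h2
  simp only [mul_ite, mul_one, mul_zero, Finset.sum_ite_eq', Finset.mem_univ, if_pos] at h2
  exact h2

lemma Kbox_fam_apply (b : Fin (d+1)) :
    theta d (Kbox d (b:ℕ) (d - (b:ℕ))) = diagFam d b :=
  theta_Kbox d (b:ℕ) (d - (b:ℕ)) (by omega)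

lemma Kbox_indep : LinearIndependent F (fun b₁ : Fin (d + 1) => Kbox d b₁ (d - b₁)) := by
  apply LinearIndependent.of_comp (theta d).toLinearMap
  have h : (⇑(theta d).toLinearMap ∘ fun b₁ : Fin (d + 1) => Kbox d b₁ (d - b₁))
      = diagFam d := by
    funext b
    exact Kbox_fam_apply d b
  rw [h]
  exact diag_indep d

def Sfam : Submodule F (B d) :=
  Submodule.span F (Set.range (fun b₁ : Fin (d + 1) => Kbox d b₁ (d - b₁)))

lemma Sfam_le_B0 : Sfam d ≤ Subalgebra.toSubmodule (B0 d) := by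
  rw [Sfam, Submodule.span_le]
  rintro x ⟨b, rfl⟩
  exact Kbox_mem_B0 d _ _

lemma finM0 : FiniteDimensional F (M0 d) :=
  FiniteDimensional.span_of_finite F (Set.finite_range _)

lemma finB0 : FiniteDimensional F (Subalgebra.toSubmodule (B0 d)) :=
  haveI := finM0 d
  Submodule.finiteDimensional_of_le (B0_le_M0 d)

lemma finrank_Sfam : Module.finrank F (Sfam d) = d + 1 := by
  have h := finrank_span_eq_card (Kbox_indep d)
  simp only [Fintype.card_fin] at h
  exact h

lemma finrank_M0_le : Module.finrank F (M0 d) ≤ d + 1 := by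
  classical
  have h := finrank_span_le_card (R := F)
    (Set.range fun i : Fin (d+1) => (bK1 d) ^ (i:ℕ))
  refine le_trans h ?_
  rw [Set.toFinset_range]
  exact le_trans Finset.card_image_le (by simp)

lemma span_eq_B0 : Sfam d = Subalgebra.toSubmodule (B0 d) := by
  haveI := finM0 d
  haveI := finB0 d
  apply Submodule.eq_of_le_of_finrank_le (Sfam_le_B0 d)
  rw [finrank_Sfam]
  exact le_trans (Submodule.finrank_mono (B0_le_M0 d)) (finrank_M0_le d)

lemma finrank_B0 : Module.finrank F (B0 d) = d + 1 := by
  rw [← Subalgebra.finrank_toSubmodule, ← span_eq_B0, finrank_Sfam]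

lemma theta_zero_of {x : B d} (hx : x ∈ B0 d) (h0 : theta d x = 0) : x = 0 := by
  have hx' : x ∈ Sfam d := by rw [span_eq_B0]; exact hx
  obtain ⟨c, hc⟩ := (Submodule.mem_span_range_iff_exists_fun F).1 hx'
  have hsum : ∑ i, c i • diagFam d i = 0 := by
    rw [← h0, ← hc, map_sum]
    refine Finset.sum_congr rfl fun i _ => ?_
    rw [_root_.map_smul, Kbox_fam_apply]
  have hc0 := Fintype.linearIndependent_iff.1 (diag_indep d) c hsum
  rw [← hc]
  simp [hc0]

lemma diagFam_mul (b b' : Fin (d+1)) :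
    diagFam d b * diagFam d b' = if b = b' then diagFam d b else 0 := by
  simp only [diagFam]
  rw [diagonal_mul_diagonal]
  rcases eq_or_ne b b' with rfl | h
  · rw [if_pos rfl]
    refine congrArg diagonal (funext fun j => ?_)
    rcases eq_or_ne (j:ℕ) (b:ℕ) with hj | hj <;> simp [hj]
  · rw [if_neg h, ← diagonal_zero]
    refine congrArg diagonal (funext fun j => ?_)
    have hbb : ¬ (b:ℕ) = (b':ℕ) := fun hh => h (Fin.ext hh)
    rcases eq_or_ne (j:ℕ) (b:ℕ) with hj | hj <;> simp [hj, hbb]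

lemma sum_ind : ∑ b₁ ∈ Finset.range (d+1),
    (diagonal (fun j : Fin (d+1) => if (j:ℕ) = b₁ then (1:F) else 0)) = 1 := by
  ext i j
  rw [Matrix.sum_apply, Matrix.one_apply]
  by_cases hij : i = j
  · subst hij
    rw [if_pos rfl, Finset.sum_congr rfl (fun b _ => diagonal_apply_eq _ i),
      Finset.sum_ite_eq]
    simp [i.isLt]
  · rw [if_neg hij, Finset.sum_congr rfl (fun b _ => diagonal_apply_ne _ hij)]
    simp

lemma Kbox_sum : (∑ b₁ ∈ Finset.range (d + 1), Kbox d b₁ (d - b₁)) = 1 := by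
  have hmem : (∑ b₁ ∈ Finset.range (d + 1), Kbox d b₁ (d - b₁)) - 1 ∈ B0 d :=
    sub_mem (Subalgebra.sum_mem _ fun b _ => Kbox_mem_B0 d _ _) (one_mem _)
  have h0 : theta d ((∑ b₁ ∈ Finset.range (d + 1), Kbox d b₁ (d - b₁)) - 1) = 0 := by
    rw [map_sub, map_sum, _root_.map_one,
      Finset.sum_congr rfl (fun b hb => theta_Kbox d b (d - b)
        (by have := Finset.mem_range.1 hb; omega)),
      sum_ind, sub_self]
  have := theta_zero_of d hmem h0
  linear_combination (norm := abel) this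

lemma Kbox_idem (b₁ b₂ : ℕ) (h : b₁ + b₂ = d) :
    Kbox d b₁ b₂ * Kbox d b₁ b₂ = Kbox d b₁ b₂ := by
  have hmem : Kbox d b₁ b₂ * Kbox d b₁ b₂ - Kbox d b₁ b₂ ∈ B0 d :=
    sub_mem (mul_mem (Kbox_mem_B0 d _ _) (Kbox_mem_B0 d _ _)) (Kbox_mem_B0 d _ _)
  have hfam : theta d (Kbox d b₁ b₂) = diagFam d ⟨b₁, by omega⟩ := theta_Kbox d b₁ b₂ h
  have h0 : theta d (Kbox d b₁ b₂ * Kbox d b₁ b₂ - Kbox d b₁ b₂) = 0 := by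
    rw [map_sub, _root_.map_mul, hfam, diagFam_mul, if_pos rfl, sub_self]
  have := theta_zero_of d hmem h0
  linear_combination (norm := abel) this

lemma Kbox_orth (b₁ b₂ b₁' b₂' : ℕ) (h : b₁ + b₂ = d) (h' : b₁' + b₂' = d)
    (hne : b₁ ≠ b₁') : Kbox d b₁ b₂ * Kbox d b₁' b₂' = 0 := by
  have hmem : Kbox d b₁ b₂ * Kbox d b₁' b₂' ∈ B0 d :=
    mul_mem (Kbox_mem_B0 d _ _) (Kbox_mem_B0 d _ _)
  have h0 : theta d (Kbox d b₁ b₂ * Kbox d b₁' b₂') = 0 := by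
    rw [_root_.map_mul, theta_Kbox d b₁ b₂ h, theta_Kbox d b₁' b₂' h']
    have : (⟨b₁, by omega⟩ : Fin (d+1)) ≠ ⟨b₁', by omega⟩ := by
      intro hh
      exact hne (congrArg Fin.val hh)
    have hm := diagFam_mul d ⟨b₁, by omega⟩ ⟨b₁', by omega⟩
    rw [if_neg this] at hm
    exact hm
  exact theta_zero_of d hmem h0

set_option synthInstance.maxHeartbeats 1000000

/-- the `d + 1` elements `K_{b₁,b₂}` (`b₁ + b₂ = d`) are mutually orthogonal
idempotents summing to `1`, and they form an `F`-basis of `B_d⁰`; in particular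
`dim_F B_d⁰ = d + 1`. -/
theorem stmt12 (d : ℕ) :
    (∀ b₁ b₂ : ℕ, b₁ + b₂ = d → Kbox d b₁ b₂ * Kbox d b₁ b₂ = Kbox d b₁ b₂) ∧
    (∀ b₁ b₂ b₁' b₂' : ℕ, b₁ + b₂ = d → b₁' + b₂' = d → b₁ ≠ b₁' →
      Kbox d b₁ b₂ * Kbox d b₁' b₂' = 0) ∧
    (∑ b₁ ∈ Finset.range (d + 1), Kbox d b₁ (d - b₁)) = 1 ∧
    (∀ b₁ b₂ : ℕ, b₁ + b₂ = d → Kbox d b₁ b₂ ∈ B0 d) ∧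
    LinearIndependent F (fun b₁ : Fin (d + 1) => Kbox d b₁ (d - b₁)) ∧
    Submodule.span F (Set.range (fun b₁ : Fin (d + 1) => Kbox d b₁ (d - b₁))) =
      Subalgebra.toSubmodule (B0 d) ∧
    Module.finrank F (B0 d) = d + 1 := by
  refine ⟨Kbox_idem d, Kbox_orth d, Kbox_sum d, fun b₁ b₂ _ => Kbox_mem_B0 d b₁ b₂,
    Kbox_indep d, span_eq_B0 d, finrank_B0 d⟩
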